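/- arXiv:1511.06907 — 3 statements merged into one kernel-verified Lean document; each statement's English description precedes it below -/
import Mathlib

section
/- The set of skew-symmetric elements (RG)^- = {α ∈ RG : α^{σ*} = -α} is spanned over R by the union of the sets A₁ = {α x : x ∈ G_*, α ∈ R, α(1 + σ(x)) = 0} and A₂ = {x - σ(x) x^* : x ∈ G \ G_*}. -/
/-! Since `σ*` is `R`-linear with `σ* (single x a) = single x* (σ x * a)`, the skew elements
form a submodule, and both kinds of generators are skew by direct computation (for `A₂` because
`σ(x*) σ(x) = 1`). Conversely, `α` is skew iff `α(x*) = -σ(x) α(x)` for all `x`, so restricting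
a skew `α` to an orbit `{x, x*}` of `*` again gives a skew element: `single x (α x)` with
`α(x) (1 + σ(x)) = 0` if `x* = x`, and `α(x) • (x - σ(x) x*)` otherwise. Splitting off one
orbit at a time, induction on the support shows that `α` lies in the span. -/

open Finsupp

/-- The generalized oriented map σ* on the group ring RG. -/
noncomputable def sigmaStar {R : Type} [CommRing R] {G : Type} [Group G]
    (inv : G → G) (σ : G →* Rˣ) (α : MonoidAlgebra R G) : MonoidAlgebra R G :=
  α.coeff.sum fun x a => MonoidAlgebra.single (inv x) ((σ x : R) * a)

/-- The set of skew-symmetric elements of RG under σ*. -/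
def skewSet {R : Type} [CommRing R] {G : Type} [Group G]
    (inv : G → G) (σ : G →* Rˣ) : Set (MonoidAlgebra R G) :=
  {α | sigmaStar inv σ α = -α}

namespace MonoidAlgebra

variable {R : Type} [CommRing R] {G : Type} [Group G] {inv : G → G} {σ : G →* Rˣ}

lemma sigmaStar_single (x : G) (a : R) :
    sigmaStar inv σ (single x a) = single (inv x) ((σ x : R) * a) := by
  simp [sigmaStar, coeff_single, Finsupp.sum_single_index]

lemma sigmaStar_add (α β : MonoidAlgebra R G) :
    sigmaStar inv σ (α + β) = sigmaStar inv σ α + sigmaStar inv σ β :=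
  Finsupp.sum_add_index' (by simp) (by simp [mul_add, single_add])

lemma sigmaStar_smul (c : R) (α : MonoidAlgebra R G) :
    sigmaStar inv σ (c • α) = c • sigmaStar inv σ α := by
  simp [sigmaStar, coeff_smul, Finsupp.sum_smul_index', Finsupp.smul_sum, mul_left_comm]

variable (inv σ) in
noncomputable def sigmaStarLinearMap : MonoidAlgebra R G →ₗ[R] MonoidAlgebra R G where
  toFun := sigmaStar inv σ
  map_add' := sigmaStar_add
  map_smul' := sigmaStar_smul

lemma sigmaStar_sub (α β : MonoidAlgebra R G) :
    sigmaStar inv σ (α - β) = sigmaStar inv σ α - sigmaStar inv σ β :=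
  map_sub (sigmaStarLinearMap inv σ) α β

variable (inv σ) in
noncomputable def skewSubmodule : Submodule R (MonoidAlgebra R G) :=
  LinearMap.eqLocus (sigmaStarLinearMap inv σ) (-LinearMap.id)

lemma coe_skewSubmodule : (skewSubmodule inv σ : Set (MonoidAlgebra R G)) = skewSet inv σ := rfl

lemma coeff_sigmaStar_inv (hinv : Function.Involutive inv) (α : MonoidAlgebra R G) (x : G) :
    (sigmaStar inv σ α).coeff (inv x) = σ x * α.coeff x := by
  classical
  induction α using induction_linear with
  | zero => simp [sigmaStar]
  | add α β hα hβ =>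
    rw [sigmaStar_add, coeff_add, coeff_add, Finsupp.add_apply, Finsupp.add_apply, hα, hβ,
      mul_add]
  | single y a =>
    rw [sigmaStar_single]
    simp only [coeff_single, Finsupp.single_apply, hinv.injective.eq_iff]
    split_ifs with h
    · rw [h]
    · simp

lemma mem_skewSet {α : MonoidAlgebra R G} : α ∈ skewSet inv σ ↔ sigmaStar inv σ α = -α :=
  Iff.rfl

lemma mem_skewSet_iff_coeff (hinv : Function.Involutive inv) {α : MonoidAlgebra R G} :
    α ∈ skewSet inv σ ↔ ∀ x, α.coeff (inv x) = -(σ x * α.coeff x) := by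
  rw [mem_skewSet, ← coeff_inj, Finsupp.ext_iff, hinv.surjective.forall]
  simp only [coeff_sigmaStar_inv hinv, coeff_neg, Finsupp.neg_apply]
  exact forall_congr' fun _ => eq_comm.trans neg_eq_iff_eq_neg

lemma val_sigma_inv_mul (hinv : Function.Involutive inv) (hcompat : ∀ x, x * inv x ∈ σ.ker)
    (x : G) : (σ (inv x) : R) * σ x = 1 := by
  have h := hcompat (inv x)
  rw [hinv, MonoidHom.mem_ker, map_mul] at h
  exact congrArg Units.val h

variable (inv σ) in
def skewGenerators : Set (MonoidAlgebra R G) :=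
  {v | ∃ (x : G) (a : R), inv x = x ∧ a * (1 + (σ x : R)) = 0 ∧ v = single x a} ∪
    {v | ∃ x : G, inv x ≠ x ∧ v = single x (1 : R) - single (inv x) (σ x : R)}

lemma single_mem_skewSet {x : G} {a : R} (hx : inv x = x) (ha : a * (1 + (σ x : R)) = 0) :
    single x a ∈ skewSet inv σ := by
  rw [mem_skewSet, sigmaStar_single, hx, ← single_neg]
  congr 1
  linear_combination ha

lemma single_sub_single_mem_skewSet (hinv : Function.Involutive inv)
    (hcompat : ∀ x, x * inv x ∈ σ.ker) (x : G) :
    single x (1 : R) - single (inv x) (σ x : R) ∈ skewSet inv σ := by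
  rw [mem_skewSet, sigmaStar_sub, sigmaStar_single, sigmaStar_single, hinv,
    val_sigma_inv_mul hinv hcompat, mul_one, neg_sub]

lemma span_skewGenerators_le (hinv : Function.Involutive inv)
    (hcompat : ∀ x, x * inv x ∈ σ.ker) :
    Submodule.span R (skewGenerators inv σ) ≤ skewSubmodule inv σ := by
  rw [Submodule.span_le, coe_skewSubmodule]
  rintro _ (⟨x, a, hx, ha, rfl⟩ | ⟨x, -, rfl⟩)
  · exact single_mem_skewSet hx ha
  · exact single_sub_single_mem_skewSet hinv hcompat x

lemma ofCoeff_filter_mem_skewSet (hinv : Function.Involutive inv) {p : G → Prop}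
    [DecidablePred p] (hp : ∀ x, p (inv x) ↔ p x) {α : MonoidAlgebra R G}
    (hα : α ∈ skewSet inv σ) :
    ofCoeff (α.coeff.filter p) ∈ skewSet inv σ := by
  rw [mem_skewSet_iff_coeff hinv] at hα ⊢
  intro x
  simp only [Finsupp.filter_apply, hp]
  split_ifs
  · exact hα x
  · simp

lemma mem_span_skewGenerators_of_mem_supported (hinv : Function.Involutive inv)
    {α : MonoidAlgebra R G} (hα : α ∈ skewSet inv σ) {x : G}
    (hsupp : α ∈ supported R R {x, inv x}) :
    α ∈ Submodule.span R (skewGenerators inv σ) := by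
  rw [mem_skewSet_iff_coeff hinv] at hα
  rw [mem_supported'] at hsupp
  by_cases hx : inv x = x
  · have : α = single x (α.coeff x) := by
      ext y
      by_cases hy : y = x
      · simp [hy]
      · simp [hsupp y (by simp [hx, hy]), Ne.symm hy]
    have hαx := hα x
    rw [hx] at hαx
    refine Submodule.subset_span (Or.inl ⟨x, α.coeff x, hx, ?_, this⟩)
    linear_combination hαx
  · have : α = α.coeff x • (single x 1 - single (inv x) (σ x : R)) := by
      ext y
      by_cases hy : y = x
      · simp [hy, hx]
      by_cases hy' : y = inv x
      · simp [hy', hα x, hx, mul_comm]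
      · simp [hsupp y (by simp [hy, hy']), Ne.symm hy, Ne.symm hy']
    rw [this]
    exact Submodule.smul_mem _ _ (Submodule.subset_span (Or.inr ⟨x, hx, rfl⟩))

lemma skewSubmodule_le_span (hinv : Function.Involutive inv) :
    skewSubmodule inv σ ≤ Submodule.span R (skewGenerators inv σ) := by
  classical
  suffices ∀ (s : Finset G) (α : MonoidAlgebra R G), α ∈ skewSet inv σ →
      α ∈ supported R R ↑s → α ∈ Submodule.span R (skewGenerators inv σ) from
    fun α hα => this α.coeff.support α hα (mem_supported.2 subset_rfl)
  intro s
  induction s using Finset.induction_on with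
  | empty =>
    intro α _ hsupp
    rw [mem_supported'] at hsupp
    rw [show α = 0 from coeff_injective (Finsupp.ext fun y => hsupp y (by simp))]
    exact Submodule.zero_mem _
  | insert x t _ ih =>
    intro α hα hsupp
    rw [mem_supported'] at hsupp
    set p : G → Prop := fun y => y = x ∨ y = inv x
    have hp : ∀ y, p (inv y) ↔ p y := fun y => by
      simp only [p, hinv.eq_iff, hinv x, or_comm]
    rw [← ofCoeff_coeff α, ← Finsupp.filter_add_filter_not α.coeff p, ofCoeff_add]
    refine Submodule.add_mem _
      (mem_span_skewGenerators_of_mem_supported hinv (x := x)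
        (ofCoeff_filter_mem_skewSet hinv hp hα) ?_)
      (ih _ (ofCoeff_filter_mem_skewSet hinv (fun y => (hp y).not) hα) ?_)
    · exact mem_supported'.2 fun y hy => Finsupp.filter_apply_neg _ _ hy
    · refine mem_supported'.2 fun y hy => ?_
      by_cases hpy : p y
      · exact Finsupp.filter_apply_neg _ _ (not_not.2 hpy)
      · exact (Finsupp.filter_apply_pos (fun y => ¬p y) α.coeff hpy).trans
          (hsupp y (by simp_all [p]))

theorem skewSubmodule_eq_span (hinv : Function.Involutive inv)
    (hcompat : ∀ x, x * inv x ∈ σ.ker) :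
    skewSubmodule inv σ = Submodule.span R (skewGenerators inv σ) :=
  le_antisymm (skewSubmodule_le_span hinv) (span_skewGenerators_le hinv hcompat)

end MonoidAlgebra

theorem stmt2_general {R : Type} [CommRing R] {G : Type} [Group G]
    (inv : G → G)
    (hinv : ∀ x : G, inv (inv x) = x) (σ : G →* Rˣ)
    (hcompat : ∀ x : G, x * inv x ∈ σ.ker) :
    skewSet inv σ =
      ↑(Submodule.span R
        ({v : MonoidAlgebra R G | ∃ (x : G) (a : R), inv x = x ∧ a * (1 + (σ x : R)) = 0 ∧
            v = MonoidAlgebra.single x a} ∪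
         {v : MonoidAlgebra R G | ∃ x : G, inv x ≠ x ∧
            v = MonoidAlgebra.single x (1 : R) - MonoidAlgebra.single (inv x) ((σ x : R))})) :=
  congrArg SetLike.coe (MonoidAlgebra.skewSubmodule_eq_span hinv hcompat)

theorem stmt2 {R : Type} [CommRing R] (hchar : ringChar R ≠ 2) {G : Type} [Group G]
    (inv : G → G) (hmul : ∀ x y : G, inv (x * y) = inv y * inv x)
    (hinv : ∀ x : G, inv (inv x) = x) (σ : G →* Rˣ) (hnt : σ ≠ 1)
    (hcompat : ∀ x : G, x * inv x ∈ σ.ker) :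
    skewSet inv σ =
      ↑(Submodule.span R
        ({v : MonoidAlgebra R G | ∃ (x : G) (a : R), inv x = x ∧ a * (1 + (σ x : R)) = 0 ∧
            v = MonoidAlgebra.single x a} ∪
         {v : MonoidAlgebra R G | ∃ x : G, inv x ≠ x ∧
            v = MonoidAlgebra.single x (1 : R) - MonoidAlgebra.single (inv x) ((σ x : R))})) :=
  stmt2_general inv hinv σ hcompat
end

section
/- If the set of skew-symmetric elements (RG)^- is anticommutative (i.e., αβ + βα = 0 for all α, β ∈ (RG)^-), then for every x ∈ G with x^* = x, one has σ(x) ≠ -1. -/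
open Finsupp

/-!
If `x = x^*` and `σ(x) = -1`, then `σ*` sends `x` to `-x`, so the basis element `x` is
skew-symmetric. Anticommutativity of `(RG)^-` applied to `α = β = x` gives `2x² = 0`, i.e.
`2 = 0` in `R`. Since `σ` is nontrivial, `R` is not the zero ring, so `char R = 2`.
-/

section

variable {R : Type} [CommRing R] {G : Type} [Group G] (inv : G → G) (σ : G →* Rˣ)

theorem sigmaStar_single (x : G) (r : R) :
    sigmaStar inv σ (MonoidAlgebra.single x r) =
      MonoidAlgebra.single (inv x) ((σ x : R) * r) := by
  rw [sigmaStar, MonoidAlgebra.coeff_single, Finsupp.sum_single_index (by simp)]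

theorem single_mem_skewSet {x : G} (hx : inv x = x) (hσx : (σ x : R) = -1) (r : R) :
    MonoidAlgebra.single x r ∈ skewSet inv σ := by
  rw [skewSet, Set.mem_ofPred_eq, sigmaStar_single, hx, hσx, neg_one_mul,
    MonoidAlgebra.single_neg]

end

theorem two_eq_zero_of_single_one_anticomm_self {R : Type} [CommRing R] {G : Type} [Group G]
    {x : G} (h : MonoidAlgebra.single x (1 : R) * MonoidAlgebra.single x 1
      + MonoidAlgebra.single x 1 * MonoidAlgebra.single x 1 = 0) : (2 : R) = 0 := by
  rwa [MonoidAlgebra.single_mul_single, ← MonoidAlgebra.single_add, mul_one, one_add_one_eq_two,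
    MonoidAlgebra.single_eq_zero] at h

theorem MonoidHom.nontrivial_of_ne_one {R : Type} [Monoid R] {G : Type} [Group G]
    {σ : G →* Rˣ} (hσ : σ ≠ 1) : Nontrivial R := by
  by_contra hR
  rw [not_nontrivial_iff_subsingleton] at hR
  exact hσ (MonoidHom.ext fun _ => Subsingleton.elim _ _)

theorem ringChar_eq_two_of_two_eq_zero {R : Type} [CommRing R] [Nontrivial R]
    (h : (2 : R) = 0) : ringChar R = 2 :=
  have := CharTwo.of_one_ne_zero_of_two_eq_zero one_ne_zero h
  ringChar.eq R 2

theorem stmt4_general {R : Type} [CommRing R] (hchar : ringChar R ≠ 2) {G : Type} [Group G]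
    (inv : G → G) (σ : G →* Rˣ) (hnt : σ ≠ 1)
    (hanti : ∀ α ∈ skewSet inv σ, ∀ β ∈ skewSet inv σ, α * β + β * α = 0) :
    ∀ x : G, inv x = x → (σ x : R) ≠ -1 := by
  intro x hx hσx
  have := MonoidHom.nontrivial_of_ne_one hnt
  have hskew := single_mem_skewSet inv σ hx hσx 1
  exact hchar (ringChar_eq_two_of_two_eq_zero
    (two_eq_zero_of_single_one_anticomm_self (hanti _ hskew _ hskew)))

theorem stmt4 {R : Type} [CommRing R] (hchar : ringChar R ≠ 2) {G : Type} [Group G]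
    (inv : G → G) (hmul : ∀ x y : G, inv (x * y) = inv y * inv x)
    (hinv : ∀ x : G, inv (inv x) = x) (σ : G →* Rˣ) (hnt : σ ≠ 1)
    (hcompat : ∀ x : G, x * inv x ∈ σ.ker)
    (hanti : ∀ α ∈ skewSet inv σ, ∀ β ∈ skewSet inv σ, α * β + β * α = 0) :
    ∀ x : G, inv x = x → (σ x : R) ≠ -1 :=
  stmt4_general hchar inv σ hnt hanti
end

section
/- If (RG)^- is anticommutative, then for all x, y ∈ G_* and α, β ∈ R with αx, βy ∈ (RG)^-: (i) xy = yx if and only if xy ∈ G_*; (ii) if xy ≠ yx then αβ = 0, and if xy = yx then 2αβ = 0. -/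
open Finsupp

namespace MonoidAlgebra

theorem single_add_single_eq_zero_iff {R M : Type*} [Ring R] {m₁ m₂ : M} {r₁ r₂ : R} :
    single m₁ r₁ + single m₂ r₂ = 0 ↔ m₁ = m₂ ∧ r₁ + r₂ = 0 ∨ r₁ = 0 ∧ r₂ = 0 := by
  rw [add_eq_zero_iff_eq_neg, ← single_neg, single_inj, neg_eq_zero, ← add_eq_zero_iff_eq_neg]

theorem mul_eq_zero_of_single_anticommute {R M : Type*} [CommRing R] [Monoid M] {x y : M}
    {a b : R} (h : single x a * single y b + single y b * single x a = 0) :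
    (x * y ≠ y * x → a * b = 0) ∧ (x * y = y * x → 2 * (a * b) = 0) := by
  rw [single_mul_single, single_mul_single, single_add_single_eq_zero_iff, mul_comm b a] at h
  constructor
  · intro hne
    rcases h with ⟨hcomm, -⟩ | ⟨hab, -⟩
    · exact absurd hcomm hne
    · exact hab
  · intro _
    rcases h with ⟨-, hsum⟩ | ⟨hab, -⟩
    · rwa [two_mul]
    · rw [hab, mul_zero]

end MonoidAlgebra

theorem stmt14_general {R : Type} [CommRing R] {G : Type} [Group G]
    (inv : G → G) (hmul : ∀ x y : G, inv (x * y) = inv y * inv x)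
    (σ : G →* Rˣ)
    (hanti : ∀ α ∈ skewSet inv σ, ∀ β ∈ skewSet inv σ, α * β + β * α = 0)
    (x y : G) (hx : inv x = x) (hy : inv y = y) (α β : R)
    (hα : (MonoidAlgebra.single x α : MonoidAlgebra R G) ∈ skewSet inv σ)
    (hβ : (MonoidAlgebra.single y β : MonoidAlgebra R G) ∈ skewSet inv σ) :
    (x * y = y * x ↔ inv (x * y) = x * y) ∧
    (x * y ≠ y * x → α * β = 0) ∧ (x * y = y * x → 2 * (α * β) = 0) := by
  refine ⟨?_, MonoidAlgebra.mul_eq_zero_of_single_anticommute (hanti _ hα _ hβ)⟩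
  rw [hmul, hx, hy, eq_comm]

theorem stmt14 {R : Type} [CommRing R] (hchar : ringChar R ≠ 2) {G : Type} [Group G]
    (inv : G → G) (hmul : ∀ x y : G, inv (x * y) = inv y * inv x)
    (hinv : ∀ x : G, inv (inv x) = x) (σ : G →* Rˣ) (hnt : σ ≠ 1)
    (hcompat : ∀ x : G, x * inv x ∈ σ.ker)
    (hanti : ∀ α ∈ skewSet inv σ, ∀ β ∈ skewSet inv σ, α * β + β * α = 0)
    (x y : G) (hx : inv x = x) (hy : inv y = y) (α β : R)
    (hα : (MonoidAlgebra.single x α : MonoidAlgebra R G) ∈ skewSet inv σ)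
    (hβ : (MonoidAlgebra.single y β : MonoidAlgebra R G) ∈ skewSet inv σ) :
    (x * y = y * x ↔ inv (x * y) = x * y) ∧
    (x * y ≠ y * x → α * β = 0) ∧ (x * y = y * x → 2 * (α * β) = 0) :=
  stmt14_general inv hmul σ hanti x y hx hy α β hα hβ
end
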